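/- arXiv:2302.05445 — 5 statements merged into one kernel-verified Lean document; each statement's English description precedes it below -/
import Mathlib

section
/- Let r and s be positive integers with r not a perfect square, and let a, b be positive integers with a^2 - r*b^2 = 1. Define P(X) = b*X^2 - 2a*X + (r+s)*b. Then |P(√r + i√s)| ≤ 2√(r+s)/(a + b√r). -/
/-!
Every `z : ℂ` is a root of `X ^ 2 - 2 (re z) X + |z| ^ 2`; for `z = √r + i√s` this polynomial is
`X ^ 2 - 2 √r X + (r + s)`, so subtracting `b` times it from `P` leaves `P(z) = -2 (a - b√r) z`.
The Pell equation makes `a - b√r = (a + b√r)⁻¹`, and the bound holds with equality.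
-/

open Complex

theorem Complex.mul_sq_sub_two_mul_add_normSq_mul (z a b : ℂ) :
    b * z ^ 2 - 2 * a * z + normSq z * b = -2 * (a - b * z.re) * z := by
  have hsum := add_conj z
  push_cast at hsum
  linear_combination (-b) * mul_conj z + (b * z) * hsum

section Pell

variable {r a b : ℝ}

theorem add_mul_sqrt_mul_sub_mul_sqrt_eq_one (hr : 0 ≤ r) (h : a ^ 2 - r * b ^ 2 = 1) :
    (a + b * √r) * (a - b * √r) = 1 := by
  linear_combination h - b ^ 2 * Real.sq_sqrt hr

/-- The conjugate units `a ± b √r` have product `1` and sum `2 a > 0`, so both are positive. -/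
theorem add_mul_sqrt_pos (hr : 0 ≤ r) (h : a ^ 2 - r * b ^ 2 = 1) (ha : 0 < a) :
    0 < a + b * √r := by
  nlinarith [add_mul_sqrt_mul_sub_mul_sqrt_eq_one hr h]

theorem sub_mul_sqrt_eq_inv (hr : 0 ≤ r) (h : a ^ 2 - r * b ^ 2 = 1) :
    a - b * √r = (a + b * √r)⁻¹ :=
  eq_inv_of_mul_eq_one_right (add_mul_sqrt_mul_sub_mul_sqrt_eq_one hr h)

end Pell

theorem stmt0_general (r s a b : ℤ) (hr : 0 < r) (hs : 0 < s) (ha : 0 < a)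
    (hpell : a ^ 2 - r * b ^ 2 = 1) :
    ‖((b : ℂ) * ((Real.sqrt (r : ℝ) : ℂ) + Complex.I * (Real.sqrt (s : ℝ) : ℂ)) ^ 2
        - 2 * (a : ℂ) * ((Real.sqrt (r : ℝ) : ℂ) + Complex.I * (Real.sqrt (s : ℝ) : ℂ))
        + ((r : ℂ) + (s : ℂ)) * (b : ℂ))‖
      ≤ 2 * Real.sqrt ((r : ℝ) + (s : ℝ)) / ((a : ℝ) + (b : ℝ) * Real.sqrt (r : ℝ)) := by
  have hr' : (0 : ℝ) ≤ r := by exact_mod_cast hr.le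
  have hpell' : (a : ℝ) ^ 2 - r * b ^ 2 = 1 := by exact_mod_cast hpell
  set z : ℂ := (√r : ℂ) + I * (√s : ℂ)
  have hnormSq : normSq z = r + s := by
    rw [show z = (√r : ℂ) + (√s : ℂ) * I from by rw [mul_comm], normSq_add_mul_I,
      Real.sq_sqrt hr', Real.sq_sqrt (by exact_mod_cast hs.le)]
  have hP : (b : ℂ) * z ^ 2 - 2 * a * z + (r + s) * b = ((-2 * (a - b * √r) : ℝ) : ℂ) * z := by
    have hre : z.re = √r := by simp [z]
    simpa [hre, hnormSq] using mul_sq_sub_two_mul_add_normSq_mul z a b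
  rw [hP, norm_mul, norm_real, Real.norm_eq_abs, norm_def, hnormSq, sub_mul_sqrt_eq_inv hr' hpell',
    abs_mul, abs_inv, abs_of_pos (add_mul_sqrt_pos hr' hpell' (by exact_mod_cast ha))]
  norm_num [div_eq_mul_inv, mul_right_comm]

theorem stmt0 (r s a b : ℤ) (hr : 0 < r) (hs : 0 < s) (ha : 0 < a) (hb : 0 < b)
    (hsq : ¬ IsSquare r) (hpell : a ^ 2 - r * b ^ 2 = 1) :
    ‖((b : ℂ) * ((Real.sqrt (r : ℝ) : ℂ) + Complex.I * (Real.sqrt (s : ℝ) : ℂ)) ^ 2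
        - 2 * (a : ℂ) * ((Real.sqrt (r : ℝ) : ℂ) + Complex.I * (Real.sqrt (s : ℝ) : ℂ))
        + ((r : ℂ) + (s : ℂ)) * (b : ℂ))‖
      ≤ 2 * Real.sqrt ((r : ℝ) + (s : ℝ)) / ((a : ℝ) + (b : ℝ) * Real.sqrt (r : ℝ)) :=
  stmt0_general r s a b hr hs ha hpell
end

section
/- Let r and s be positive integers with r not a perfect square, and let a, b be positive integers with a^2 - r*b^2 = 1. Then the polynomial P(X) = b*X^2 - 2a*X + (r+s)*b has a complex root α with |(√r + i√s) - α| ≤ 2(r+s)^2 / H(P)^2, where H(P) = max{b, 2a, (r+s)b} is the height of P. -/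
/-!
The Pell relation `a² - r b² = 1` makes `a / b` an approximation of `√r` from above with
error at most `1 / (2 b²)`. With `c = √(s b² - 1)`, the number `(a + c i) / b` is a root of
`P = b X² - 2a X + (r + s) b`, and `s - (c / b)² = 1 / b²` makes `c / b` an approximation of
`√s` with error at most `1 / b²`. So the root lies within `3 / (2 b²)` of `√r + i √s`, and
this is at most `2 (r + s)² / H(P)²` because `H(P)` is comparable to `(r + s) b`.
-/

open Complex

theorem two_le_of_sq_sub_mul_sq_eq_one {r a b : ℤ} (hr : 0 < r) (hb : 0 < b)
    (hpell : a ^ 2 - r * b ^ 2 = 1) : 2 ≤ r := by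
  by_contra! hr2
  obtain rfl : r = 1 := by omega
  -- `a²` would lie strictly between `b²` and `(b + 1)²`.
  rcases le_or_gt (|a|) b with h | h <;> nlinarith [sq_abs a, abs_nonneg a]

section OrderedRing

variable {R : Type*} [CommRing R] [LinearOrder R] [IsStrictOrderedRing R]

theorem three_mul_sq_max_le {r s a b : R} (hr : 2 ≤ r) (hs : 1 ≤ s) (hb : 1 ≤ b)
    (hpell : a ^ 2 - r * b ^ 2 = 1) :
    3 * max b (max (2 * a) ((r + s) * b)) ^ 2 ≤ 4 * (r + s) ^ 2 * b ^ 2 := by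
  rcases max_choice b (max (2 * a) ((r + s) * b)) with h | h <;> rw [h]
  · nlinarith [mul_le_mul_of_nonneg_right (by nlinarith : (1 : R) ≤ (r + s) ^ 2) (sq_nonneg b)]
  rcases max_choice (2 * a) ((r + s) * b) with h | h <;> rw [h]
  · have hrs : (r + 1) ^ 2 ≤ (r + s) ^ 2 := by nlinarith
    nlinarith [mul_le_mul_of_nonneg_right hrs (sq_nonneg b),
      mul_nonneg (mul_nonneg (by linarith : (0 : R) ≤ r - 2) (by linarith : (0 : R) ≤ r + 1))
        (sq_nonneg b)]
  · nlinarith [sq_nonneg ((r + s) * b)]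

end OrderedRing

theorem abs_sub_le_abs_sq_sub_sq_div {K : Type*} [Field K] [LinearOrder K]
    [IsStrictOrderedRing K] {x y m : K} (hm : 0 < m) (hxy : m ≤ x + y) :
    |x - y| ≤ |x ^ 2 - y ^ 2| / m := by
  rw [le_div_iff₀ hm, sq_sub_sq, abs_mul, abs_of_pos (hm.trans_le hxy), mul_comm (x + y)]
  exact mul_le_mul_of_nonneg_left hxy (abs_nonneg _)

theorem mul_div_sq_sub_two_mul_div_add_eq_zero {K : Type*} [Field K] {r s a b w : K}
    (hb : b ≠ 0) (hpell : a ^ 2 - r * b ^ 2 = 1) (hw : w ^ 2 = 1 - s * b ^ 2) :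
    b * ((a + w) / b) ^ 2 - 2 * a * ((a + w) / b) + (r + s) * b = 0 := by
  field_simp
  linear_combination hw - hpell

section Approximation

variable {r s a b c : ℝ}

theorem abs_sqrt_sub_div_le_of_pell (hr : 1 ≤ r) (ha : 0 < a) (hb : 0 < b)
    (hpell : a ^ 2 - r * b ^ 2 = 1) : |√r - a / b| ≤ 1 / (2 * b ^ 2) := by
  have hsqrt : 1 ≤ √r := Real.one_le_sqrt.mpr hr
  have hab : 1 ≤ a / b := by
    rw [le_div_iff₀ hb]
    nlinarith
  have hsq : √r ^ 2 - (a / b) ^ 2 = -(1 / b ^ 2) := by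
    rw [Real.sq_sqrt (by linarith), div_pow, eq_neg_iff_add_eq_zero]
    field_simp
    linear_combination -hpell
  calc |√r - a / b| ≤ |√r ^ 2 - (a / b) ^ 2| / 2 :=
        abs_sub_le_abs_sq_sub_sq_div two_pos (by linarith)
    _ = 1 / (2 * b ^ 2) := by
        rw [hsq, abs_neg, abs_of_pos (by positivity)]
        ring

theorem abs_sqrt_sub_div_le (hs : 1 ≤ s) (hb : 0 < b) (hc : 0 ≤ c)
    (hcsq : c ^ 2 = s * b ^ 2 - 1) : |√s - c / b| ≤ 1 / b ^ 2 := by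
  have hsqrt : 1 ≤ √s := Real.one_le_sqrt.mpr hs
  have hsq : √s ^ 2 - (c / b) ^ 2 = 1 / b ^ 2 := by
    rw [Real.sq_sqrt (by linarith), div_pow, hcsq]
    field_simp
    ring
  calc |√s - c / b| ≤ |√s ^ 2 - (c / b) ^ 2| / 1 :=
        abs_sub_le_abs_sq_sub_sq_div one_pos (by linarith [div_nonneg hc hb.le])
    _ = 1 / b ^ 2 := by rw [hsq, div_one, abs_of_pos (by positivity)]

theorem norm_sqrt_add_I_mul_sqrt_sub_le (hr : 1 ≤ r) (hs : 1 ≤ s) (ha : 0 < a) (hb : 0 < b)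
    (hpell : a ^ 2 - r * b ^ 2 = 1) (hc : 0 ≤ c) (hcsq : c ^ 2 = s * b ^ 2 - 1) :
    ‖((√r : ℂ) + I * (√s : ℂ)) - ((a : ℂ) + c * I) / b‖ ≤ 3 / (2 * b ^ 2) := by
  have hsplit : ((√r : ℂ) + I * (√s : ℂ)) - ((a : ℂ) + c * I) / b
      = ((√r - a / b : ℝ) : ℂ) + ((√s - c / b : ℝ) : ℂ) * I := by
    push_cast
    ring
  calc _ ≤ |√r - a / b| + |√s - c / b| := by
        rw [hsplit]
        simpa using Complex.norm_le_abs_re_add_abs_im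
          (((√r - a / b : ℝ) : ℂ) + ((√s - c / b : ℝ) : ℂ) * I)
    _ ≤ 1 / (2 * b ^ 2) + 1 / b ^ 2 := add_le_add
        (abs_sqrt_sub_div_le_of_pell hr ha hb hpell) (abs_sqrt_sub_div_le hs hb hc hcsq)
    _ = 3 / (2 * b ^ 2) := by ring

end Approximation

theorem stmt1_general (r s a b : ℤ) (hr : 0 < r) (hs : 0 < s) (ha : 0 < a) (hb : 0 < b)
    (hpell : a ^ 2 - r * b ^ 2 = 1) :
    ∃ α : ℂ, (b : ℂ) * α ^ 2 - 2 * (a : ℂ) * α + ((r : ℂ) + (s : ℂ)) * (b : ℂ) = 0 ∧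
      ‖((Real.sqrt (r : ℝ) : ℂ) + Complex.I * (Real.sqrt (s : ℝ) : ℂ)) - α‖
        ≤ 2 * ((r : ℝ) + (s : ℝ)) ^ 2 / ((max b (max (2 * a) ((r + s) * b)) : ℤ) : ℝ) ^ 2 := by
  have hr2 : (2 : ℝ) ≤ r := by exact_mod_cast two_le_of_sq_sub_mul_sq_eq_one hr hb hpell
  have hs1 : (1 : ℝ) ≤ s := by exact_mod_cast hs
  have hb1 : (1 : ℝ) ≤ b := by exact_mod_cast hb
  have hpellR : (a : ℝ) ^ 2 - r * b ^ 2 = 1 := by exact_mod_cast hpell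
  set c := √((s : ℝ) * b ^ 2 - 1)
  have hcsq : c ^ 2 = s * b ^ 2 - 1 := Real.sq_sqrt (by nlinarith)
  have hcI : ((c : ℂ) * I) ^ 2 = 1 - s * b ^ 2 := by
    rw [mul_pow, I_sq, ← ofReal_pow, hcsq]
    push_cast
    ring
  refine ⟨((a : ℝ) + c * I) / (b : ℝ), ?_, ?_⟩
  · push_cast at hcI ⊢
    exact mul_div_sq_sub_two_mul_div_add_eq_zero (by exact_mod_cast hb.ne')
      (by exact_mod_cast hpell) hcI
  have hheight := three_mul_sq_max_le hr2 hs1 hb1 hpellR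
  calc _ ≤ 3 / (2 * (b : ℝ) ^ 2) := norm_sqrt_add_I_mul_sqrt_sub_le (by linarith) hs1
        (by exact_mod_cast ha) (by linarith) hpellR (Real.sqrt_nonneg _) hcsq
    _ ≤ _ := by
        rw [div_le_div_iff₀ (by positivity) (by positivity)]
        push_cast
        nlinarith

theorem stmt1 (r s a b : ℤ) (hr : 0 < r) (hs : 0 < s) (ha : 0 < a) (hb : 0 < b)
    (hsq : ¬ IsSquare r) (hpell : a ^ 2 - r * b ^ 2 = 1) :
    ∃ α : ℂ, (b : ℂ) * α ^ 2 - 2 * (a : ℂ) * α + ((r : ℂ) + (s : ℂ)) * (b : ℂ) = 0 ∧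
      ‖((Real.sqrt (r : ℝ) : ℂ) + Complex.I * (Real.sqrt (s : ℝ) : ℂ)) - α‖
        ≤ 2 * ((r : ℝ) + (s : ℝ)) ^ 2 / ((max b (max (2 * a) ((r + s) * b)) : ℤ) : ℝ) ^ 2 :=
  stmt1_general r s a b hr hs ha hb hpell
end

section
/- There exist infinitely many pairs of positive integers (a, b) with a^2 - 2*b^2 = 1, and consequently, setting ξ = √2 + i, there exist algebraic numbers α of degree at most 2 of arbitrarily large height such that |ξ - α| ≤ 18 / H(α)^2. -/
/-- The naïve height of an integer polynomial: the maximum of the absolute values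
of its coefficients. -/
noncomputable def polyHeight (P : Polynomial ℤ) : ℕ :=
  P.support.sup fun i => (P.coeff i).natAbs

/-- `P` is a minimal defining integer polynomial of the algebraic number `α`. -/
def IsMinIntPoly (α : ℂ) (P : Polynomial ℤ) : Prop :=
  Irreducible P ∧ Polynomial.aeval α P = 0

/-!
Solutions of `a² - 8k² = 1` come from Mathlib's Pell sequence for `x² - (3² - 1)y² = 1`; each gives
the solution `(a, 2k)` of `a² - 2b² = 1`. For such `a, k` the polynomial `kX² - aX + 3k` is primitive
(a common divisor of `k` and `a` divides `a² - 8k² = 1`), has discriminant `1 - 4k² < 0`, hence is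
irreducible, has height `3k` and the root `α = (a + i√(4k² - 1)) / (2k)`. Both `a - 2√2 k` and
`2k - √(4k² - 1)` are differences `u - v` with `u² - v² = 1`, so of size `O(1/k)`; hence
`|√2 + i - α| = O(1/k²)`.
-/

open Polynomial Complex

theorem exists_sq_sub_eight_mul_sq_eq_one (N : ℕ) :
    ∃ a k : ℤ, 0 < a ∧ N < k ∧ a ^ 2 - 8 * k ^ 2 = 1 := by
  have a1 : 1 < 3 := by norm_num
  refine ⟨Pell.xz a1 (N + 1), Pell.yz a1 (N + 1), ?_, ?_, ?_⟩
  · simpa only [Pell.xz, Nat.cast_pos] using Pell.x_pos a1 (N + 1)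
  · have := Pell.yn_ge_n a1 (N + 1)
    simp only [Pell.yz]
    omega
  -- `Pell.pell_eqz` is stated with a private constant `d a1`, which unfolds to `3 * 3 - 1`.
  · have h : Pell.xz a1 (N + 1) * Pell.xz a1 (N + 1)
        - ((3 * 3 - 1 : ℕ) : ℤ) * Pell.yz a1 (N + 1) * Pell.yz a1 (N + 1) = 1 :=
      Pell.pell_eqz a1 (N + 1)
    linear_combination h

theorem infinite_setOf_sq_sub_two_mul_sq_eq_one :
    {p : ℤ × ℤ | 0 < p.1 ∧ 0 < p.2 ∧ p.1 ^ 2 - 2 * p.2 ^ 2 = 1}.Infinite := by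
  refine Set.Infinite.of_image Prod.snd (Set.infinite_of_not_bddAbove ?_)
  rintro ⟨M, hM⟩
  obtain ⟨a, k, ha, hk, h⟩ := exists_sq_sub_eight_mul_sq_eq_one M.toNat
  have := hM ⟨(a, 2 * k), ⟨ha, by omega, by linear_combination h⟩, rfl⟩
  omega

theorem polyHeight_eq_sup_range {P : ℤ[X]} {n : ℕ} (hn : P.natDegree < n) :
    polyHeight P = (Finset.range n).sup fun i => (P.coeff i).natAbs := by
  refine le_antisymm (Finset.sup_mono fun i hi => ?_) (Finset.sup_le fun i _ => ?_)
  · exact Finset.mem_range.2 ((le_natDegree_of_mem_supp i hi).trans_lt hn)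
  · by_cases hi : P.coeff i = 0
    · simp [hi]
    · exact Finset.le_sup (f := fun i => (P.coeff i).natAbs) (mem_support_iff.2 hi)

theorem polyHeight_quadratic (a b c : ℤ) :
    polyHeight (C a * X ^ 2 + C b * X + C c) = max a.natAbs (max b.natAbs c.natAbs) := by
  rw [polyHeight_eq_sup_range (Nat.lt_succ_of_le natDegree_quadratic_le)]
  simp only [Finset.range_add_one, Finset.range_zero, Finset.sup_insert, Finset.sup_empty,
    coeff_add, coeff_C_mul, coeff_X_pow, coeff_X, coeff_C]
  norm_num

theorem isPrimitive_quadratic_of_isCoprime {a b c : ℤ} (h : IsCoprime a b) :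
    (C a * X ^ 2 + C b * X + C c).IsPrimitive := by
  intro r hr
  rw [C_dvd_iff_dvd_coeff] at hr
  have h2 := hr 2
  have h1 := hr 1
  simp only [coeff_add, coeff_C_mul, coeff_X_pow, coeff_X, coeff_C] at h2 h1
  norm_num at h2 h1
  exact h.isUnit_of_dvd' h2 h1

theorem polyHeight_pell_quadratic {a k : ℤ} (hk : 0 < k) (h : a ^ 2 - 8 * k ^ 2 = 1) :
    (polyHeight (C k * X ^ 2 + C (-a) * X + C (3 * k)) : ℤ) = 3 * k := by
  have : a ≤ 3 * k := by nlinarith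
  have : -(3 * k) ≤ a := by nlinarith
  rw [polyHeight_quadratic]
  omega

theorem irreducible_quadratic_of_isPrimitive_of_discrim_neg {a b c : ℤ}
    (hprim : (C a * X ^ 2 + C b * X + C c).IsPrimitive) (hdisc : discrim a b c < 0) :
    Irreducible (C a * X ^ 2 + C b * X + C c) := by
  have ha : a ≠ 0 := by
    rintro rfl
    simp only [discrim] at hdisc
    nlinarith
  rw [hprim.irreducible_iff_irreducible_map_fraction_map (K := ℚ)]
  simp only [Polynomial.map_add, Polynomial.map_mul, Polynomial.map_pow, map_C, map_X,
    algebraMap_int_eq, Int.coe_castRingHom]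
  have haQ : (a : ℚ) ≠ 0 := by exact_mod_cast ha
  rw [irreducible_iff_roots_eq_zero_of_degree_le_three (by rw [natDegree_quadratic haQ])
    (by rw [natDegree_quadratic haQ]; norm_num), Multiset.eq_zero_iff_forall_notMem]
  intro x hx
  rw [mem_roots (ne_zero_of_natDegree_gt (n := 1) (by rw [natDegree_quadratic haQ]; norm_num)),
    IsRoot] at hx
  simp only [eval_add, eval_mul, eval_C, eval_X, sq] at hx
  have hdiscQ : discrim (a : ℚ) b c < 0 := by
    simp only [discrim] at hdisc ⊢
    exact_mod_cast hdisc
  rw [discrim_eq_sq_of_quadratic_eq_zero hx] at hdiscQ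
  exact (sq_nonneg _).not_gt hdiscQ

theorem quadratic_eq_zero_of_sq_eq_neg_discrim {a b c s : ℝ} (ha : a ≠ 0)
    (hs : s ^ 2 = -discrim a b c) :
    (a : ℂ) * (((-b + s * I) / (2 * a)) * ((-b + s * I) / (2 * a)))
      + b * ((-b + s * I) / (2 * a)) + c = 0 := by
  refine (quadratic_eq_zero_iff (mod_cast ha) (s := s * I) ?_ _).2 (Or.inl rfl)
  have : (s : ℂ) ^ 2 = -discrim (a : ℂ) b c := by
    simp only [discrim] at hs ⊢
    exact_mod_cast hs
  linear_combination this - s ^ 2 * I_sq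

theorem abs_sub_le_inv_of_sq_sub_sq_eq_one {u v : ℝ} (hu : 0 < u) (hv : 0 ≤ v)
    (h : u ^ 2 - v ^ 2 = 1) : |u - v| ≤ u⁻¹ := by
  have hvu : v < u := by nlinarith
  have hinv : (u - v)⁻¹ = u + v := inv_eq_of_mul_eq_one_right (by linear_combination h)
  rw [abs_of_pos (sub_pos.2 hvu), le_inv_comm₀ (sub_pos.2 hvu) hu, hinv]
  linarith

theorem norm_sqrt_two_add_I_sub_le {a k : ℝ} (ha : 0 < a) (hk : 1 ≤ 2 * k)
    (h : a ^ 2 - 8 * k ^ 2 = 1) :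
    ‖((√2 : ℂ) + I) - (a + √(4 * k ^ 2 - 1) * I) / (2 * k)‖ ≤ 2 / k ^ 2 := by
  have hk0 : 0 < k := by linarith
  set s := √(4 * k ^ 2 - 1)
  have hs : s ^ 2 = 4 * k ^ 2 - 1 := Real.sq_sqrt (by nlinarith)
  have hre : |a - 2 * √2 * k| ≤ a⁻¹ :=
    abs_sub_le_inv_of_sq_sub_sq_eq_one ha (by positivity)
      (by rw [mul_pow, mul_pow, Real.sq_sqrt zero_le_two]; linarith)
  have him : |2 * k - s| ≤ (2 * k)⁻¹ :=
    abs_sub_le_inv_of_sq_sub_sq_eq_one (by linarith) (Real.sqrt_nonneg _) (by linarith)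
  have hka : a⁻¹ ≤ k⁻¹ := inv_anti₀ hk0 (by nlinarith)
  have hz : ((√2 : ℂ) + I) - (a + s * I) / (2 * k)
      = ((2 * √2 * k - a) / (2 * k) : ℝ) + ((2 * k - s) / (2 * k) : ℝ) * I := by
    have : (k : ℂ) ≠ 0 := by exact_mod_cast hk0.ne'
    push_cast
    field_simp
    ring
  calc ‖((√2 : ℂ) + I) - (a + s * I) / (2 * k)‖
      ≤ |a - 2 * √2 * k| / (2 * k) + |2 * k - s| / (2 * k) := by
        rw [hz]
        refine (norm_add_le _ _).trans_eq ?_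
        rw [norm_mul, norm_I, mul_one, Complex.norm_real, Complex.norm_real, Real.norm_eq_abs,
          Real.norm_eq_abs, abs_div, abs_div, abs_sub_comm, abs_of_pos (by positivity : 0 < 2 * k)]
    _ ≤ k⁻¹ / (2 * k) + (2 * k)⁻¹ / (2 * k) := by gcongr; exact hre.trans hka
    _ ≤ 2 / k ^ 2 := by
        field_simp
        linarith

theorem stmt2 :
    {p : ℤ × ℤ | 0 < p.1 ∧ 0 < p.2 ∧ p.1 ^ 2 - 2 * p.2 ^ 2 = 1}.Infinite ∧
    ∀ B : ℝ, ∃ (α : ℂ) (P : Polynomial ℤ), IsMinIntPoly α P ∧ P.natDegree ≤ 2 ∧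
      B < (polyHeight P : ℝ) ∧
      ‖((Real.sqrt 2 : ℂ) + Complex.I) - α‖ ≤ 18 / (polyHeight P : ℝ) ^ 2 := by
  refine ⟨infinite_setOf_sq_sub_two_mul_sq_eq_one, fun B => ?_⟩
  obtain ⟨a, k, ha, hBk, h⟩ := exists_sq_sub_eight_mul_sq_eq_one ⌈B⌉₊
  have hk : 0 < k := by omega
  have hkR : (1 : ℝ) ≤ k := by exact_mod_cast hk
  have hR : (a : ℝ) ^ 2 - 8 * k ^ 2 = 1 := by exact_mod_cast h
  have hheight : (polyHeight (C k * X ^ 2 + C (-a) * X + C (3 * k)) : ℝ) = 3 * k := by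
    exact_mod_cast polyHeight_pell_quadratic hk h
  refine ⟨(a + √(4 * k ^ 2 - 1) * I) / (2 * k), C k * X ^ 2 + C (-a) * X + C (3 * k),
    ⟨irreducible_quadratic_of_isPrimitive_of_discrim_neg (isPrimitive_quadratic_of_isCoprime
      ⟨-8 * k, -a, by linear_combination h⟩) (by rw [discrim]; nlinarith), ?_⟩,
    natDegree_quadratic_le, ?_, ?_⟩
  · have := quadratic_eq_zero_of_sq_eq_neg_discrim (b := -a) (c := 3 * k)
      (s := √(4 * k ^ 2 - 1)) (by positivity)
      (by rw [Real.sq_sqrt (by nlinarith), discrim]; linear_combination hR)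
    simp only [map_add, map_mul, aeval_C, aeval_X_pow, aeval_X, algebraMap_int_eq,
      Int.coe_castRingHom]
    push_cast at this ⊢
    linear_combination this
  · have : (⌈B⌉₊ : ℝ) < k := by exact_mod_cast hBk
    rw [hheight]
    linarith [Nat.le_ceil B]
  · rw [hheight, show 18 / (3 * (k : ℝ)) ^ 2 = 2 / k ^ 2 by field_simp; norm_num]
    exact norm_sqrt_two_add_I_sub_le (by exact_mod_cast ha) (by linarith) hR
end

section
/- Let ξ be a complex non-real algebraic number of degree d ≥ 2 and let n be a positive integer. Then there exists a positive constant c, depending on ξ and n, such that |ξ - α| > c · H(α)^(-d/2) for every complex algebraic number α of degree at most n. -/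
open Polynomial ComplexConjugate

lemma Set.Finite.exists_pos_forall_le_dist {X : Type*} [MetricSpace X] {S : Set X}
    (hS : S.Finite) (x : X) : ∃ ε > 0, ∀ y ∈ S, y ≠ x → ε ≤ dist x y := by
  obtain ⟨ε, hε, hball⟩ := Metric.mem_nhds_iff.mp
    ((hS.sdiff (t := {x})).isClosed.compl_mem_nhds fun hx => hx.2 rfl)
  exact ⟨ε, hε, fun y hy hyx => not_lt.mp fun h => hball (Metric.mem_ball'.mpr h) ⟨hy, hyx⟩⟩

lemma norm_pow_sub_pow_le {𝕜 : Type*} [NormedField 𝕜] {x y : 𝕜} {R : ℝ}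
    (hx : ‖x‖ ≤ R) (hy : ‖y‖ ≤ R) (i : ℕ) :
    ‖x ^ i - y ^ i‖ ≤ i * R ^ (i - 1) * ‖x - y‖ := by
  rw [← geom_sum₂_mul, norm_mul]
  gcongr
  calc ‖∑ j ∈ Finset.range i, x ^ j * y ^ (i - 1 - j)‖
      ≤ ∑ j ∈ Finset.range i, R ^ (i - 1) := by
        refine norm_sum_le_of_le _ fun j hj => ?_
        obtain ⟨k, hk⟩ : ∃ k, i - 1 = j + k := ⟨i - 1 - j, by have := Finset.mem_range.mp hj; omega⟩
        have hR : 0 ≤ R := (norm_nonneg x).trans hx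
        rw [norm_mul, norm_pow, norm_pow, hk, pow_add, Nat.add_sub_cancel_left]
        gcongr
    _ = i * R ^ (i - 1) := by simp

lemma inv_sqrt_mul_rpow_le_of_one_le {K H t : ℝ} (hK : 0 < K) (hH : 0 < H) (ht : 0 ≤ t) {d : ℕ}
    (h : 1 ≤ K * H ^ d * t ^ 2) : (√K)⁻¹ * H ^ (-(d : ℝ) / 2) ≤ t := by
  have hsq : ((√K)⁻¹ * H ^ (-(d : ℝ) / 2)) ^ 2 = (K * H ^ d)⁻¹ := by
    rw [mul_pow, inv_pow, Real.sq_sqrt hK.le, ← Real.rpow_mul_natCast hH.le,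
      show -(d : ℝ) / 2 * (2 : ℕ) = -(d : ℝ) by push_cast; ring, Real.rpow_neg hH.le,
      Real.rpow_natCast, mul_inv]
  rw [← pow_le_pow_iff_left₀ (by positivity) ht two_ne_zero, hsq]
  exact (inv_le_iff_one_le_mul₀' (by positivity)).mpr h

lemma norm_coeff_le_polyHeight (P : ℤ[X]) (i : ℕ) : ‖(P.coeff i : ℂ)‖ ≤ polyHeight P := by
  rw [Complex.norm_intCast, ← Int.cast_abs, Int.abs_eq_natAbs, Int.cast_natCast, Nat.cast_le]
  by_cases h : P.coeff i = 0
  · simp [h]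
  · exact Finset.le_sup (f := fun i => (P.coeff i).natAbs) (mem_support_iff.mpr h)

lemma one_le_polyHeight {P : ℤ[X]} (hP : P ≠ 0) : 1 ≤ polyHeight P := by
  obtain ⟨i, hi⟩ := support_nonempty.mpr hP
  exact (Int.natAbs_pos.mpr (mem_support_iff.mp hi)).trans_le
    (Finset.le_sup (f := fun i => (P.coeff i).natAbs) hi)

lemma norm_aeval_le {P : ℤ[X]} {n : ℕ} (hn : P.natDegree ≤ n) (z : ℂ) :
    ‖aeval z P‖ ≤ (n + 1) * max 1 ‖z‖ ^ n * polyHeight P := by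
  rw [aeval_eq_sum_range' (Nat.lt_succ_of_le hn)]
  calc ‖∑ i ∈ Finset.range (n + 1), P.coeff i • z ^ i‖
      ≤ ∑ i ∈ Finset.range (n + 1), max 1 ‖z‖ ^ n * polyHeight P := by
        refine norm_sum_le_of_le _ fun i hi => ?_
        rw [zsmul_eq_mul, norm_mul, norm_pow, mul_comm]
        gcongr
        · calc ‖z‖ ^ i ≤ max 1 ‖z‖ ^ i := by gcongr; exact le_max_right _ _
            _ ≤ max 1 ‖z‖ ^ n :=
              pow_le_pow_right₀ (le_max_left _ _) (Nat.lt_succ_iff.mp (Finset.mem_range.mp hi))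
        · exact norm_coeff_le_polyHeight P i
    _ = (n + 1) * max 1 ‖z‖ ^ n * polyHeight P := by simp [mul_assoc]

lemma prod_norm_aeval_le {P : ℤ[X]} {n : ℕ} (hn : P.natDegree ≤ n) (s : Multiset ℂ) :
    (s.map fun β => ‖aeval β P‖).prod ≤
      (s.map fun β => (n + 1) * max 1 ‖β‖ ^ n).prod * (polyHeight P : ℝ) ^ Multiset.card s := by
  calc (s.map fun β => ‖aeval β P‖).prod
      ≤ (s.map fun β => (n + 1) * max 1 ‖β‖ ^ n * (polyHeight P : ℝ)).prod :=
        Multiset.prod_map_le_prod_map₀ _ _ (fun _ _ => norm_nonneg _) fun β _ => norm_aeval_le hn β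
    _ = _ := by rw [Multiset.prod_map_mul, Multiset.map_const', Multiset.prod_replicate]

lemma norm_aeval_sub_aeval_le {P : ℤ[X]} {n : ℕ} (hn : P.natDegree ≤ n) {x y : ℂ} {R : ℝ}
    (hR : 1 ≤ R) (hx : ‖x‖ ≤ R) (hy : ‖y‖ ≤ R) :
    ‖aeval x P - aeval y P‖ ≤ (n + 1) ^ 2 * R ^ n * polyHeight P * ‖x - y‖ := by
  rw [aeval_eq_sum_range' (Nat.lt_succ_of_le hn), aeval_eq_sum_range' (Nat.lt_succ_of_le hn),
    ← Finset.sum_sub_distrib]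
  calc ‖∑ i ∈ Finset.range (n + 1), (P.coeff i • x ^ i - P.coeff i • y ^ i)‖
      ≤ ∑ i ∈ Finset.range (n + 1), (n + 1) * R ^ n * polyHeight P * ‖x - y‖ := by
        refine norm_sum_le_of_le _ fun i hi => ?_
        have hin : i ≤ n := Nat.lt_succ_iff.mp (Finset.mem_range.mp hi)
        rw [← smul_sub, zsmul_eq_mul, norm_mul]
        calc ‖(P.coeff i : ℂ)‖ * ‖x ^ i - y ^ i‖
            ≤ polyHeight P * (i * R ^ (i - 1) * ‖x - y‖) :=
              mul_le_mul (norm_coeff_le_polyHeight P i) (norm_pow_sub_pow_le hx hy i)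
                (norm_nonneg _) (Nat.cast_nonneg _)
          _ ≤ polyHeight P * ((n + 1) * R ^ n * ‖x - y‖) := by
              gcongr
              · exact_mod_cast hin.trans n.le_succ
              · omega
          _ = (n + 1) * R ^ n * polyHeight P * ‖x - y‖ := by ring
    _ = (n + 1) ^ 2 * R ^ n * polyHeight P * ‖x - y‖ := by
        rw [Finset.sum_const, Finset.card_range, nsmul_eq_mul]; push_cast; ring

lemma Irreducible.dvd_of_aeval_eq_zero {K A : Type*} [Field K] [CommRing A] [Nontrivial A]
    [Algebra K A] {p q : K[X]} (hp : Irreducible p) {x : A} (hpx : aeval x p = 0)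
    (hqx : aeval x q = 0) : p ∣ q := by
  by_contra h
  obtain ⟨u, v, huv⟩ := hp.coprime_iff_not_dvd.mpr h
  simpa [hpx, hqx] using congrArg (aeval x) huv

lemma aeval_eq_zero_of_irreducible_of_aeval_eq_zero {K : Type*} [Field K] [CharZero K]
    {P Q : ℤ[X]} (hP : Irreducible P) {ξ α : K} (hPξ : aeval ξ P = 0) (hQξ : aeval ξ Q = 0)
    (hPα : aeval α P = 0) : aeval α Q = 0 := by
  have hdeg : P.natDegree ≠ 0 := fun h => hP.ne_zero <| by
    rw [eq_C_of_natDegree_eq_zero h, aeval_C, map_eq_zero_iff _ (algebraMap ℤ K).injective_int]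
      at hPξ
    rw [eq_C_of_natDegree_eq_zero h, hPξ, C_0]
  have hirr : Irreducible (P.map (algebraMap ℤ ℚ)) :=
    (hP.isPrimitive hdeg).irreducible_iff_irreducible_map_fraction_map.mp hP
  rw [← aeval_map_algebraMap ℚ] at hPξ hQξ hPα ⊢
  exact aeval_eq_zero_of_dvd_aeval_eq_zero (hirr.dvd_of_aeval_eq_zero hPξ hQξ) hPα

lemma exists_irreducible_map_aeval_eq_zero_natDegree_eq_minpoly {K : Type*} [Field K]
    [CharZero K] {ξ : K} (hξ : IsIntegral ℚ ξ) :
    ∃ Q : ℤ[X], Irreducible (Q.map (algebraMap ℤ ℚ)) ∧ aeval ξ Q = 0 ∧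
      Q.natDegree = (minpoly ℚ ξ).natDegree := by
  obtain ⟨b, hb, hQ⟩ := IsLocalization.integerNormalization_spec (nonZeroDivisors ℤ) (minpoly ℚ ξ)
  have hb0 : (b : ℚ) ≠ 0 := by exact_mod_cast nonZeroDivisors.ne_zero hb
  rw [← smul_one_smul ℚ b, Int.smul_one_eq_cast, smul_eq_C_mul] at hQ
  refine ⟨IsLocalization.integerNormalization (nonZeroDivisors ℤ) (minpoly ℚ ξ), ?_, ?_, ?_⟩
  · rw [hQ, irreducible_isUnit_mul (isUnit_C.mpr hb0.isUnit)]
    exact minpoly.irreducible hξ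
  · rw [← aeval_map_algebraMap ℚ, hQ, map_mul, minpoly.aeval, mul_zero]
  · rw [← natDegree_map_eq_of_injective (algebraMap ℤ ℚ).injective_int, hQ,
      natDegree_C_mul hb0]

lemma one_le_abs_leadingCoeff_pow_mul_prod_norm_aeval {P Q : ℤ[X]}
    (hcop : IsCoprime (Q.map (algebraMap ℤ ℚ)) (P.map (algebraMap ℤ ℚ))) :
    1 ≤ |(Q.leadingCoeff : ℝ)| ^ P.natDegree * ((Q.aroots ℂ).map fun β => ‖aeval β P‖).prod := by
  have hr0 : resultant Q P ≠ 0 := by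
    have := resultant_ne_zero _ _ hcop
    rwa [natDegree_map_eq_of_injective (algebraMap ℤ ℚ).injective_int,
      natDegree_map_eq_of_injective (algebraMap ℤ ℚ).injective_int, resultant_map_map,
      map_ne_zero_iff _ (algebraMap ℤ ℚ).injective_int] at this
  have hrC : ((resultant Q P : ℤ) : ℂ) =
      Q.leadingCoeff ^ P.natDegree * ((Q.aroots ℂ).map fun β => aeval β P).prod := by
    have := resultant_eq_prod_eval (Q.map (algebraMap ℤ ℂ)) (P.map (algebraMap ℤ ℂ))
      P.natDegree natDegree_map_le (IsAlgClosed.splits _)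
    rw [natDegree_map_eq_of_injective (algebraMap ℤ ℂ).injective_int, resultant_map_map,
      leadingCoeff_map_of_injective (algebraMap ℤ ℂ).injective_int] at this
    simp only [eval_map_algebraMap] at this
    rwa [aroots_def]
  calc (1 : ℝ) ≤ |((resultant Q P : ℤ) : ℝ)| := by exact_mod_cast Int.one_le_abs hr0
    _ = ‖((resultant Q P : ℤ) : ℂ)‖ := (Complex.norm_intCast _).symm
    _ = _ := by
      rw [hrC, norm_mul, norm_pow, Complex.norm_intCast]
      congr 1
      exact (map_multiset_prod (normHom : ℂ →*₀ ℝ) _).trans (by rw [Multiset.map_map]; rfl)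

lemma aeval_conj_int (P : ℤ[X]) (z : ℂ) : aeval (conj z) P = conj (aeval z P) :=
  aeval_algHom_apply (starRingEnd ℂ).toIntAlgHom z P

lemma conj_mem_erase_aroots {Q : ℤ[X]} {ξ : ℂ} (hξ : ξ ∈ Q.aroots ℂ) (him : ξ.im ≠ 0) :
    conj ξ ∈ (Q.aroots ℂ).erase ξ := by
  obtain ⟨hQ0, hQξ⟩ := mem_aroots.mp hξ
  exact (Multiset.mem_erase_of_ne (mt Complex.conj_eq_iff_im.mp him)).mpr
    (mem_aroots.mpr ⟨hQ0, by rw [aeval_conj_int, hQξ, map_zero]⟩)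

lemma exists_one_le_mul_polyHeight_pow_mul_norm_aeval_sq {Q : ℤ[X]}
    (hQ : Irreducible (Q.map (algebraMap ℤ ℚ))) {ξ : ℂ} (hQξ : aeval ξ Q = 0) (hξ : ξ.im ≠ 0)
    (n : ℕ) : ∃ A > 0, ∀ P : ℤ[X], P.natDegree ≤ n → aeval ξ P ≠ 0 →
      1 ≤ A * polyHeight P ^ (Q.natDegree - 2) * ‖aeval ξ P‖ ^ 2 := by
  classical
  have hQ0 : Q ≠ 0 := fun h => hQ.ne_zero (by rw [h, Polynomial.map_zero])
  have hξmem : ξ ∈ Q.aroots ℂ := mem_aroots.mpr ⟨hQ0, hQξ⟩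
  have hconj := conj_mem_erase_aroots hξmem hξ
  set rest := ((Q.aroots ℂ).erase ξ).erase (conj ξ)
  have hcard : Multiset.card rest = Q.natDegree - 2 := by
    rw [Multiset.card_erase_of_mem hconj, Multiset.card_erase_of_mem hξmem, aroots_def,
      IsAlgClosed.card_roots_map_eq_natDegree_of_injective _ (algebraMap ℤ ℂ).injective_int]
    simp only [Nat.pred_eq_sub_one]
    omega
  have hlc : 1 ≤ |(Q.leadingCoeff : ℝ)| := by
    exact_mod_cast Int.one_le_abs (leadingCoeff_ne_zero.mpr hQ0)
  set B := (rest.map fun β => (n + 1) * max 1 ‖β‖ ^ n).prod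
  have hB : 0 < B := Multiset.prod_pos fun _ hb => by
    obtain ⟨β, -, rfl⟩ := Multiset.mem_map.mp hb; positivity
  refine ⟨|(Q.leadingCoeff : ℝ)| ^ n * B, by positivity, fun P hPn hPξ => ?_⟩
  have hcop : IsCoprime (Q.map (algebraMap ℤ ℚ)) (P.map (algebraMap ℤ ℚ)) :=
    hQ.coprime_iff_not_dvd.mpr fun hdvd => hPξ <| by
      rw [← aeval_map_algebraMap ℚ] at hQξ ⊢
      exact aeval_eq_zero_of_dvd_aeval_eq_zero hdvd hQξ
  have hrest := prod_norm_aeval_le hPn rest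
  rw [hcard] at hrest
  calc (1 : ℝ)
      ≤ |(Q.leadingCoeff : ℝ)| ^ P.natDegree * ((Q.aroots ℂ).map fun β => ‖aeval β P‖).prod :=
        one_le_abs_leadingCoeff_pow_mul_prod_norm_aeval hcop
    _ = |(Q.leadingCoeff : ℝ)| ^ P.natDegree *
          (‖aeval ξ P‖ ^ 2 * (rest.map fun β => ‖aeval β P‖).prod) := by
        rw [← Multiset.prod_map_erase hξmem, ← Multiset.prod_map_erase hconj, aeval_conj_int,
          Complex.norm_conj]
        ring
    _ ≤ |(Q.leadingCoeff : ℝ)| ^ n *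
          (‖aeval ξ P‖ ^ 2 * (B * (polyHeight P : ℝ) ^ (Q.natDegree - 2))) :=
        mul_le_mul (pow_le_pow_right₀ hlc hPn) (mul_le_mul_of_nonneg_left hrest (sq_nonneg _))
          (mul_nonneg (sq_nonneg _) (Multiset.prod_nonneg fun _ hx => by
            obtain ⟨β, -, rfl⟩ := Multiset.mem_map.mp hx; exact norm_nonneg _))
          (by positivity)
    _ = _ := by ring

lemma polyHeight_rpow_neg_half_le_one {P : ℤ[X]} (hP : P ≠ 0) (d : ℕ) :
    (polyHeight P : ℝ) ^ (-(d : ℝ) / 2) ≤ 1 :=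
  Real.rpow_le_one_of_one_le_of_nonpos (by exact_mod_cast one_le_polyHeight hP)
    (by rw [neg_div, neg_nonpos]; positivity)

lemma exists_mul_polyHeight_rpow_le_norm_sub {Q : ℤ[X]} (hQ : Irreducible (Q.map (algebraMap ℤ ℚ)))
    {ξ : ℂ} (hQξ : aeval ξ Q = 0) (hξ : ξ.im ≠ 0) (hd : 2 ≤ Q.natDegree) (n : ℕ) :
    ∃ c > 0, ∀ (α : ℂ) (P : ℤ[X]), aeval α P = 0 → P.natDegree ≤ n → aeval ξ P ≠ 0 →
      c * (polyHeight P : ℝ) ^ (-(Q.natDegree : ℝ) / 2) ≤ ‖ξ - α‖ := by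
  obtain ⟨A, hA, hAP⟩ := exists_one_le_mul_polyHeight_pow_mul_norm_aeval_sq hQ hQξ hξ n
  set L : ℝ := (n + 1) ^ 2 * (‖ξ‖ + 1) ^ n
  refine ⟨min (√(A * L ^ 2))⁻¹ 1, by positivity, fun α P hPα hPn hPξ => ?_⟩
  have hP0 : P ≠ 0 := by rintro rfl; exact hPξ (map_zero _)
  have hH : (0 : ℝ) < polyHeight P := by exact_mod_cast one_le_polyHeight hP0
  rcases le_or_gt ‖ξ - α‖ 1 with hclose | hfar
  swap
  · calc _ ≤ 1 * 1 := mul_le_mul (min_le_right _ _)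
          (polyHeight_rpow_neg_half_le_one hP0 _) (by positivity) zero_le_one
      _ ≤ ‖ξ - α‖ := by rw [one_mul]; exact hfar.le
  have hα : ‖α‖ ≤ ‖ξ‖ + 1 := by
    linarith [norm_le_norm_add_norm_sub' α ξ, norm_sub_rev α ξ]
  have hlip : ‖aeval ξ P‖ ≤ L * polyHeight P * ‖ξ - α‖ := by
    simpa [hPα, L] using norm_aeval_sub_aeval_le hPn (by simp) (by simp) hα
  refine le_trans (by gcongr; exact min_le_left _ _)
    (inv_sqrt_mul_rpow_le_of_one_le (by positivity) hH (norm_nonneg _) ?_)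
  calc (1 : ℝ) ≤ A * polyHeight P ^ (Q.natDegree - 2) * ‖aeval ξ P‖ ^ 2 := hAP P hPn hPξ
    _ ≤ A * polyHeight P ^ (Q.natDegree - 2) * (L * polyHeight P * ‖ξ - α‖) ^ 2 := by gcongr
    _ = A * L ^ 2 * polyHeight P ^ (Q.natDegree - 2 + 2) * ‖ξ - α‖ ^ 2 := by ring
    _ = _ := by rw [Nat.sub_add_cancel hd]

theorem stmt3_general (ξ : ℂ) (hnr : ξ.im ≠ 0) (d : ℕ) (hd : 2 ≤ d)
    (hdeg : (minpoly ℚ ξ).natDegree = d) (n : ℕ) :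
    ∃ c > (0 : ℝ), ∀ (α : ℂ) (P : Polynomial ℤ), IsMinIntPoly α P → P.natDegree ≤ n →
      α ≠ ξ → c * (polyHeight P : ℝ) ^ (-(d : ℝ) / 2) < ‖ξ - α‖ := by
  have hξ : IsIntegral ℚ ξ := minpoly.ne_zero_iff.mp fun h => by
    rw [h, natDegree_zero] at hdeg; omega
  obtain ⟨Q, hQ, hQξ, hQd⟩ := exists_irreducible_map_aeval_eq_zero_natDegree_eq_minpoly hξ
  subst hdeg
  rw [← hQd] at hd ⊢
  obtain ⟨c, hc, hnonconj⟩ := exists_mul_polyHeight_rpow_le_norm_sub hQ hQξ hnr hd n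
  obtain ⟨ε, hε, hconj⟩ := (Q.rootSet_finite ℂ).exists_pos_forall_le_dist ξ
  refine ⟨min c ε / 2, by positivity, fun α P ⟨hP, hPα⟩ hPn hαξ => ?_⟩
  set T : ℝ := (polyHeight P : ℝ) ^ (-(Q.natDegree : ℝ) / 2)
  have hT : 0 < T := Real.rpow_pos_of_pos (by exact_mod_cast one_le_polyHeight hP.ne_zero) _
  suffices min c ε * T ≤ ‖ξ - α‖ by linarith [mul_pos (lt_min hc hε) hT]
  by_cases hPξ : aeval ξ P = 0
  · have hα : α ∈ Q.rootSet ℂ := mem_rootSet.mpr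
      ⟨fun h => hQ.ne_zero (by rw [h, Polynomial.map_zero]),
        aeval_eq_zero_of_irreducible_of_aeval_eq_zero hP hPξ hQξ hPα⟩
    calc min c ε * T ≤ ε * 1 :=
          mul_le_mul (min_le_right _ _) (polyHeight_rpow_neg_half_le_one hP.ne_zero _) hT.le hε.le
      _ ≤ ‖ξ - α‖ := by rw [mul_one, ← dist_eq_norm]; exact hconj α hα hαξ
  · exact (mul_le_mul_of_nonneg_right (min_le_left _ _) hT.le).trans
      (hnonconj α P hPα hPn hPξ)

/-- The complex Liouville inequality. -/
theorem stmt3 (ξ : ℂ) (hnr : ξ.im ≠ 0) (d : ℕ) (hd : 2 ≤ d)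
    (hdeg : (minpoly ℚ ξ).natDegree = d) (n : ℕ) (hn : 1 ≤ n) :
    ∃ c > (0 : ℝ), ∀ (α : ℂ) (P : Polynomial ℤ), IsMinIntPoly α P → P.natDegree ≤ n →
      α ≠ ξ → c * (polyHeight P : ℝ) ^ (-(d : ℝ) / 2) < ‖ξ - α‖ :=
  stmt3_general ξ hnr d hd hdeg n
end

section
/- Let f(X) = X^6 - 3X^5 + 5X^4 - 5X^3 + 5X^2 - 3X + 1. Then f is irreducible over ℚ, all roots of f are non-real, and the roots can be labeled ξ₁, conj(ξ₁), ξ₂, conj(ξ₂), ξ₃, conj(ξ₃) so that ξ₁·conj(ξ₁) = 1, ξ₂ + conj(ξ₂) = 1, and ξ₃ + conj(ξ₃) = ξ₃·conj(ξ₃). -/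
/-!
Let ρ be the plastic number, the real root of `x ^ 3 = x + 1`. Over `ℝ`,
`f = (X² - (1 - ρ) X + 1) (X² - X + (ρ² - ρ)) (X² - (ρ + 1) X + (ρ + 1))`, and each quadratic
factor has negative discriminant; its two roots are the conjugate pairs of the statement.
A monic rational factor of `f` of degree at most 3 either has odd degree, hence a real root,
or is a quadratic whose non-real root `z` has rational `z + z̄` and `z z̄`. Both are impossible:
`f` has no real root, and each root of `f` has `z + z̄ ∈ {1 - ρ, ρ + 1}` or `z z̄ = ρ² - ρ`,
which are irrational because `x ^ 3 - x - 1` has no rational root.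
-/

open Polynomial

noncomputable def fpoly : Polynomial ℚ :=
  X ^ 6 - 3 * X ^ 5 + 5 * X ^ 4 - 5 * X ^ 3 + 5 * X ^ 2 - 3 * X + 1

open Complex ComplexConjugate Filter

theorem Polynomial.Monic.exists_isRoot_of_odd_natDegree {p : ℝ[X]} (hp : p.Monic)
    (hodd : Odd p.natDegree) : ∃ x, p.IsRoot x := by
  have hdeg : 0 < p.degree := natDegree_pos_iff_degree_pos.mp hodd.pos
  have htop : Tendsto p.eval atTop atTop :=
    p.tendsto_atTop_of_leadingCoeff_nonneg hdeg (by simp [hp.leadingCoeff])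
  have hpow : Tendsto (fun x : ℝ => x ^ p.natDegree) atBot atBot := by
    have h := (tendsto_pow_atTop (α := ℝ) hodd.pos.ne').comp tendsto_neg_atBot_atTop
    refine (tendsto_neg_atTop_atBot.comp h).congr fun x => ?_
    simp [hodd.neg_pow]
  have hbot : Tendsto p.eval atBot atBot :=
    p.isEquivalent_atBot_lead.symm.tendsto_atBot (by simpa [hp.leadingCoeff] using hpow)
  obtain ⟨x, hx⟩ := p.continuous.surjective htop hbot 0
  exact ⟨x, hx⟩

theorem Polynomial.Monic.not_irrational_re_and_normSq_of_natDegree_eq_two {q : ℚ[X]} (hq : q.Monic)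
    (h2 : q.natDegree = 2) {z : ℂ} (hz : aeval z q = 0) (him : z.im ≠ 0) :
    ¬ Irrational z.re ∧ ¬ Irrational (normSq z) := by
  have hquad : z ^ 2 + q.coeff 1 * z + q.coeff 0 = 0 := by
    rw [hq.as_sum, h2] at hz
    simpa [Finset.sum_range_succ, add_comm, add_left_comm, add_assoc] using hz
  have hquad' : conj z ^ 2 + q.coeff 1 * conj z + q.coeff 0 = 0 := by
    simpa using congrArg conj hquad
  have hne : z - conj z ≠ 0 := by
    rw [sub_ne_zero]
    exact fun h => him (conj_eq_iff_im.mp h.symm)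
  have hfactor : (z - conj z) * (z + conj z + q.coeff 1) = 0 := by
    linear_combination hquad - hquad'
  have hsum : z + conj z = -(q.coeff 1 : ℂ) := by
    linear_combination (mul_eq_zero.mp hfactor).resolve_left hne
  have hprod : z * conj z = q.coeff 0 := by linear_combination z * hsum - hquad
  rw [add_conj] at hsum
  rw [mul_conj] at hprod
  refine ⟨fun h => h ⟨-q.coeff 1 / 2, ?_⟩, fun h => h ⟨q.coeff 0, ?_⟩⟩
  · have : 2 * z.re = -(q.coeff 1 : ℝ) := by exact_mod_cast hsum
    push_cast; linarith
  · exact_mod_cast hprod.symm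

theorem Polynomial.Monic.irreducible_of_complex_roots_nonreal_irrational {f : ℚ[X]}
    (hf : f.Monic) (hf1 : f ≠ 1) (hdeg : f.natDegree < 8)
    (hreal : ∀ z : ℂ, aeval z f = 0 → z.im ≠ 0)
    (hquad : ∀ z : ℂ, aeval z f = 0 → Irrational z.re ∨ Irrational (normSq z)) :
    Irreducible f := by
  rw [hf.irreducible_iff_lt_natDegree_lt hf1]
  rintro q hq hqdeg ⟨g, rfl⟩
  rw [Finset.mem_Ioc] at hqdeg
  have hroot : ∀ z : ℂ, aeval z q = 0 → aeval z (q * g) = 0 := fun z hz => by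
    rw [map_mul, hz, zero_mul]
  rcases Nat.even_or_odd q.natDegree with heven | hodd
  · have h2 : q.natDegree = 2 := by obtain ⟨k, hk⟩ := heven; omega
    obtain ⟨z, hz⟩ := Complex.exists_root (f := q.map (algebraMap ℚ ℂ))
      (by rw [hq.degree_map, ← natDegree_pos_iff_degree_pos]; omega)
    rw [IsRoot, eval_map_algebraMap] at hz
    have him := hreal z (hroot z hz)
    have ⟨hre, hnormSq⟩ := hq.not_irrational_re_and_normSq_of_natDegree_eq_two h2 hz him
    exact (hquad z (hroot z hz)).elim hre hnormSq
  · obtain ⟨x, hx⟩ := (hq.map (algebraMap ℚ ℝ)).exists_isRoot_of_odd_natDegree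
      (by rwa [hq.natDegree_map])
    refine hreal x (hroot x ?_) (ofReal_im x)
    rw [IsRoot, eval_map_algebraMap] at hx
    rw [← coe_algebraMap, aeval_algebraMap_apply, hx, map_zero]

theorem exists_pow_three_eq_add_one : ∃ ρ : ℝ, ρ ^ 3 = ρ + 1 := by
  have hmonic : (X ^ 3 - X - 1 : ℝ[X]).Monic := by monicity!
  have hdeg : (X ^ 3 - X - 1 : ℝ[X]).natDegree = 3 := by compute_degree!
  obtain ⟨ρ, hρ⟩ := hmonic.exists_isRoot_of_odd_natDegree (by rw [hdeg]; decide)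
  exact ⟨ρ, by simpa [sub_eq_zero, sub_sub] using hρ⟩

noncomputable def plasticNumber : ℝ := exists_pow_three_eq_add_one.choose

theorem plasticNumber_pow_three : plasticNumber ^ 3 = plasticNumber + 1 :=
  exists_pow_three_eq_add_one.choose_spec

theorem one_lt_plasticNumber : 1 < plasticNumber := by
  nlinarith [plasticNumber_pow_three, sq_nonneg (plasticNumber + 1), sq_nonneg plasticNumber]

theorem plasticNumber_lt_two : plasticNumber < 2 := by
  nlinarith [plasticNumber_pow_three, one_lt_plasticNumber, sq_nonneg (plasticNumber - 1)]

theorem irrational_plasticNumber : Irrational plasticNumber := by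
  rintro ⟨t, ht⟩
  have hroot : aeval t (X ^ 3 - X - 1 : ℤ[X]) = 0 := by
    have h : (t : ℝ) ^ 3 - t - 1 = 0 := by rw [ht, plasticNumber_pow_three]; ring
    simpa using (by exact_mod_cast h : t ^ 3 - t - 1 = 0)
  obtain ⟨n, rfl, -⟩ := exists_integer_of_is_root_of_monic (by monicity!) hroot
  have h1 := one_lt_plasticNumber
  have h2 := plasticNumber_lt_two
  rw [← ht, algebraMap_int_eq, eq_intCast] at h1 h2
  norm_cast at h1 h2
  omega

theorem irrational_plasticNumber_sq_sub_self : Irrational (plasticNumber ^ 2 - plasticNumber) := by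
  rintro ⟨t, ht⟩
  have ht0 : (t : ℝ) ≠ 0 := by rw [ht]; nlinarith [one_lt_plasticNumber]
  refine irrational_plasticNumber ⟨(1 - t) / t, ?_⟩
  rw [Rat.cast_div, div_eq_iff (by exact_mod_cast ht0)]
  push_cast
  rw [ht]
  linear_combination -plasticNumber_pow_three

theorem fpoly_map_eq {R : Type*} [CommRing R] [Algebra ℚ R] {r : R} (hr : r ^ 3 = r + 1) :
    fpoly.map (algebraMap ℚ R) = (X ^ 2 - C (1 - r) * X + 1) * (X ^ 2 - X + C (r ^ 2 - r)) *
      (X ^ 2 - C (r + 1) * X + C (r + 1)) := by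
  have hC : C r ^ 3 = C r + 1 := by rw [← map_pow, hr, map_add, map_one]
  simp only [fpoly, Polynomial.map_add, Polynomial.map_sub, Polynomial.map_mul, Polynomial.map_pow,
    Polynomial.map_X, Polynomial.map_ofNat, Polynomial.map_one, map_sub, map_add, map_one, map_pow]
  linear_combination (-1 + (2 - C r) * X + (C r - 2) * X ^ 2) * hC

theorem Complex.exists_im_ne_zero_re_normSq {a n : ℝ} (h : a ^ 2 < n) :
    ∃ z : ℂ, z.im ≠ 0 ∧ z.re = a ∧ normSq z = n := by
  have hpos : 0 < n - a ^ 2 := sub_pos.mpr h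
  refine ⟨⟨a, √(n - a ^ 2)⟩, (Real.sqrt_pos.mpr hpos).ne', rfl, ?_⟩
  rw [normSq_mk, ← sq, ← sq, Real.sq_sqrt hpos.le]
  ring

theorem Complex.X_sub_C_mul_X_sub_C_conj (z : ℂ) :
    (X - C z) * (X - C (conj z)) = X ^ 2 - C ((2 * z.re : ℝ) : ℂ) * X + C (normSq z : ℂ) := by
  rw [← add_conj, ← mul_conj, map_add, map_mul]
  ring

theorem roots_map_fpoly {r : ℝ} (hr : r ^ 3 = r + 1) {ξ₁ ξ₂ ξ₃ : ℂ}
    (h₁ : ξ₁.re = (1 - r) / 2 ∧ normSq ξ₁ = 1) (h₂ : ξ₂.re = 1 / 2 ∧ normSq ξ₂ = r ^ 2 - r)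
    (h₃ : ξ₃.re = (r + 1) / 2 ∧ normSq ξ₃ = r + 1) :
    (fpoly.map (algebraMap ℚ ℂ)).roots = {ξ₁, conj ξ₁, ξ₂, conj ξ₂, ξ₃, conj ξ₃} := by
  have hfactor : fpoly.map (algebraMap ℚ ℂ) =
      ((X - C ξ₁) * (X - C (conj ξ₁))) * ((X - C ξ₂) * (X - C (conj ξ₂))) *
        ((X - C ξ₃) * (X - C (conj ξ₃))) := by
    have hs₁ : ((2 * ξ₁.re : ℝ) : ℂ) = 1 - r := by rw [h₁.1]; push_cast; ring
    have hs₂ : ((2 * ξ₂.re : ℝ) : ℂ) = 1 := by rw [h₂.1]; norm_num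
    have hs₃ : ((2 * ξ₃.re : ℝ) : ℂ) = r + 1 := by rw [h₃.1]; push_cast; ring
    have hp₂ : (normSq ξ₂ : ℂ) = r ^ 2 - r := by rw [h₂.2]; push_cast; ring
    have hp₃ : (normSq ξ₃ : ℂ) = r + 1 := by rw [h₃.2]; push_cast; ring
    rw [fpoly_map_eq (r := (r : ℂ)) (by exact_mod_cast hr), X_sub_C_mul_X_sub_C_conj,
      X_sub_C_mul_X_sub_C_conj, X_sub_C_mul_X_sub_C_conj, hs₁, hs₂, hs₃, h₁.2, hp₂, hp₃,
      ofReal_one, C_1, one_mul]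
  rw [← roots_multiset_prod_X_sub_C {ξ₁, conj ξ₁, ξ₂, conj ξ₂, ξ₃, conj ξ₃}, hfactor]
  simp only [Multiset.insert_eq_cons, Multiset.map_cons, Multiset.map_singleton,
    Multiset.prod_cons, Multiset.prod_singleton, mul_assoc]

theorem forall_mem_conj_pairs {P : ℂ → Prop} (hP : ∀ z, P z → P (conj z)) {ξ₁ ξ₂ ξ₃ : ℂ}
    (h₁ : P ξ₁) (h₂ : P ξ₂) (h₃ : P ξ₃) :
    ∀ z ∈ ({ξ₁, conj ξ₁, ξ₂, conj ξ₂, ξ₃, conj ξ₃} : Multiset ℂ), P z := by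
  simp only [Multiset.insert_eq_cons, Multiset.mem_cons, Multiset.mem_singleton]
  rintro z (rfl | rfl | rfl | rfl | rfl | rfl)
  exacts [h₁, hP _ h₁, h₂, hP _ h₂, h₃, hP _ h₃]

theorem fpoly_monic : fpoly.Monic := by
  unfold fpoly; monicity!

theorem natDegree_fpoly : fpoly.natDegree = 6 := by
  unfold fpoly; compute_degree!

theorem exists_conj_pairs_roots_map_fpoly : ∃ ξ₁ ξ₂ ξ₃ : ℂ,
    (fpoly.map (algebraMap ℚ ℂ)).roots = {ξ₁, conj ξ₁, ξ₂, conj ξ₂, ξ₃, conj ξ₃} ∧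
    (∀ z ∈ (fpoly.map (algebraMap ℚ ℂ)).roots,
      z.im ≠ 0 ∧ (Irrational z.re ∨ Irrational (normSq z))) ∧
    ξ₁ * conj ξ₁ = 1 ∧ ξ₂ + conj ξ₂ = 1 ∧ ξ₃ + conj ξ₃ = ξ₃ * conj ξ₃ := by
  have hρ₁ := one_lt_plasticNumber
  have hρ₂ := plasticNumber_lt_two
  have hρ₃ := plasticNumber_pow_three
  obtain ⟨ξ₁, him₁, hre₁, hn₁⟩ :=
    exists_im_ne_zero_re_normSq (a := (1 - plasticNumber) / 2) (n := 1) (by nlinarith)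
  obtain ⟨ξ₂, him₂, hre₂, hn₂⟩ := exists_im_ne_zero_re_normSq (a := 1 / 2)
    (n := plasticNumber ^ 2 - plasticNumber) (by nlinarith)
  obtain ⟨ξ₃, him₃, hre₃, hn₃⟩ := exists_im_ne_zero_re_normSq (a := (plasticNumber + 1) / 2)
    (n := plasticNumber + 1) (by nlinarith)
  have hroots := roots_map_fpoly hρ₃ ⟨hre₁, hn₁⟩ ⟨hre₂, hn₂⟩ ⟨hre₃, hn₃⟩
  refine ⟨ξ₁, ξ₂, ξ₃, hroots, hroots ▸ forall_mem_conj_pairs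
    (P := fun w => w.im ≠ 0 ∧ (Irrational w.re ∨ Irrational (normSq w))) (fun w => by simp)
    ⟨him₁, .inl ?_⟩ ⟨him₂, .inr ?_⟩ ⟨him₃, .inl ?_⟩, ?_, ?_, ?_⟩
  · rw [hre₁]
    simpa using (irrational_plasticNumber.natCast_sub 1).div_natCast two_ne_zero
  · rw [hn₂]
    exact irrational_plasticNumber_sq_sub_self
  · rw [hre₃]
    simpa using (irrational_plasticNumber.add_natCast 1).div_natCast two_ne_zero
  · rw [mul_conj, hn₁, ofReal_one]
  · rw [add_conj, hre₂]
    norm_num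
  · rw [add_conj, mul_conj, hre₃, hn₃]
    push_cast
    ring

theorem stmt8 :
    Irreducible fpoly ∧
    (∀ z : ℂ, Polynomial.aeval z fpoly = 0 → z.im ≠ 0) ∧
    ∃ ξ₁ ξ₂ ξ₃ : ℂ,
      (fpoly.map (algebraMap ℚ ℂ)).roots =
        {ξ₁, starRingEnd ℂ ξ₁, ξ₂, starRingEnd ℂ ξ₂, ξ₃, starRingEnd ℂ ξ₃} ∧
      ξ₁ * starRingEnd ℂ ξ₁ = 1 ∧
      ξ₂ + starRingEnd ℂ ξ₂ = 1 ∧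
      ξ₃ + starRingEnd ℂ ξ₃ = ξ₃ * starRingEnd ℂ ξ₃ := by
  obtain ⟨ξ₁, ξ₂, ξ₃, hroots, hnonreal, h₁, h₂, h₃⟩ := exists_conj_pairs_roots_map_fpoly
  have hP (z : ℂ) (hz : aeval z fpoly = 0) :
      z.im ≠ 0 ∧ (Irrational z.re ∨ Irrational (normSq z)) :=
    hnonreal z <| (mem_roots (fpoly_monic.map _).ne_zero).mpr <| by
      rwa [IsRoot, eval_map_algebraMap]
  have hf1 : fpoly ≠ 1 := fun h => by simpa [h] using natDegree_fpoly
  refine ⟨fpoly_monic.irreducible_of_complex_roots_nonreal_irrational hf1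
    (by rw [natDegree_fpoly]; norm_num) (fun z hz => (hP z hz).1) (fun z hz => (hP z hz).2),
    fun z hz => (hP z hz).1, ξ₁, ξ₂, ξ₃, hroots, h₁, h₂, h₃⟩
end
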